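/- Let m > d ≥ 1 and 0 < r_1 < r_2. For every k ∈ ℤ, b ∈ ℝ^d, and every x ∈ ℝ^m such that the Euclidean norm of the last m − d coordinates satisfies ‖(x_{d+1}, …, x_m)‖₂ ≥ r_2, the extended wavelet vanishes: Ψ_{k,b}(x) = 0. -/
import Mathlib


open MeasureTheory

/-- The rectifier (ReLU) function. -/
noncomputable def rect (x : ℝ) : ℝ := max 0 x

/-- The trapezoid function `t`: equal to 2 on [-1,1], vanishing outside (-3,3), linear between. -/
noncomputable def trap (x : ℝ) : ℝ := rect (x + 3) - rect (x + 1) - rect (x - 1) + rect (x - 3)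

/-- The scaling ("father") function `φ(x) = C_d · rect(Σ_j t(x_j) − 2(d−1))` on `ℝ^d`. -/
noncomputable def scalingFn (d : ℕ) (Cd : ℝ) (x : EuclideanSpace ℝ (Fin d)) : ℝ :=
  Cd * rect ((∑ j, trap (x j)) - 2 * ((d : ℝ) - 1))

/-- The trapezoid `t_r` of height 2, equal to 2 on `[−α,α]` and vanishing outside `(−β,β)`. -/
noncomputable def trapr (a b x : ℝ) : ℝ :=
  (2 / (b - a)) * (rect (x + b) - rect (x + a) - rect (x - a) + rect (x - b))

/-- The extended scaling function `φ_r^{k,b} : ℝ^m → ℝ`. -/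
noncomputable def extScaling (m d : ℕ) (Cd r1 r2 : ℝ) (k : ℤ) (b : Fin d → ℝ)
    (x : EuclideanSpace ℝ (Fin m)) : ℝ :=
  Cd * rect ((∑ j : Fin m,
      if h : (j : ℕ) < d then trap ((2 : ℝ) ^ ((k : ℝ) / d) * (x j - b ⟨j, h⟩))
      else trapr (r1 / Real.sqrt ((m : ℝ) - d)) (r2 / Real.sqrt ((m : ℝ) - d)) (x j)) -
    2 * ((m : ℝ) - 1))

/-- The extended wavelet `Ψ_{k,b}(x) = 2^{k/2}(φ_r^{k,b}(x) − 2⁻¹ φ_r^{k−1,b}(x))`. -/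
noncomputable def extPsi (m d : ℕ) (Cd r1 r2 : ℝ) (k : ℤ) (b : Fin d → ℝ)
    (x : EuclideanSpace ℝ (Fin m)) : ℝ :=
  (2 : ℝ) ^ ((k : ℝ) / 2) *
    (extScaling m d Cd r1 r2 k b x - 2⁻¹ * extScaling m d Cd r1 r2 (k - 1) b x)


lemma rect_mono' {a b : ℝ} (h : a ≤ b) : rect a ≤ rect b := max_le_max le_rfl h

lemma rect_sub_le {a b : ℝ} (h : b ≤ a) : rect a - rect b ≤ a - b := by
  unfold rect
  rcases le_total a 0 with ha | ha <;> rcases le_total b 0 with hb | hb <;>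
    simp [max_eq_left, max_eq_right, *] <;> linarith

lemma trap_le_two (y : ℝ) : trap y ≤ 2 := by
  have h1 : rect (y + 3) - rect (y + 1) ≤ (y + 3) - (y + 1) := rect_sub_le (by linarith)
  have h2 : rect (y - 3) ≤ rect (y - 1) := rect_mono' (by linarith)
  unfold trap; linarith

lemma trapr_le_two {a b : ℝ} (hab : a < b) (y : ℝ) : trapr a b y ≤ 2 := by
  have hba : 0 < b - a := by linarith
  have h1 : rect (y + b) - rect (y + a) ≤ (y + b) - (y + a) := rect_sub_le (by linarith)
  have h2 : rect (y - b) ≤ rect (y - a) := rect_mono' (by linarith)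
  have hE : rect (y + b) - rect (y + a) - rect (y - a) + rect (y - b) ≤ b - a := by linarith
  have hnn : 0 ≤ 2 / (b - a) := by positivity
  calc trapr a b y ≤ (2 / (b - a)) * (b - a) := mul_le_mul_of_nonneg_left hE hnn
    _ = 2 := by field_simp

lemma trapr_eq_zero {a b y : ℝ} (ha : 0 < a) (hab : a < b) (hy : b ≤ |y|) :
    trapr a b y = 0 := by
  rcases le_abs.mp hy with h | h
  · have h1 : rect (y + b) = y + b := max_eq_right (by linarith)
    have h2 : rect (y + a) = y + a := max_eq_right (by linarith)
    have h3 : rect (y - a) = y - a := max_eq_right (by linarith)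
    have h4 : rect (y - b) = y - b := max_eq_right (by linarith)
    unfold trapr; rw [h1, h2, h3, h4]; ring
  · have h1 : rect (y + b) = 0 := max_eq_left (by linarith)
    have h2 : rect (y + a) = 0 := max_eq_left (by linarith)
    have h3 : rect (y - a) = 0 := max_eq_left (by linarith)
    have h4 : rect (y - b) = 0 := max_eq_left (by linarith)
    unfold trapr; rw [h1, h2, h3, h4]; ring

lemma extScaling_eq_zero (m d : ℕ) (Cd r1 r2 : ℝ)
    (hr1 : 0 < r1) (hr12 : r1 < r2) (hdm : d < m)
    (k : ℤ) (b : Fin d → ℝ) (x : EuclideanSpace ℝ (Fin m))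
    (j0 : Fin m) (hj0d : d ≤ (j0 : ℕ))
    (hj0 : r2 / Real.sqrt ((m : ℝ) - d) ≤ |x j0|) :
    extScaling m d Cd r1 r2 k b x = 0 := by
  set a := r1 / Real.sqrt ((m : ℝ) - d) with ha_def
  set c := r2 / Real.sqrt ((m : ℝ) - d) with hc_def
  have hmd : (0 : ℝ) < (m : ℝ) - d := by
    have : (d : ℝ) < m := by exact_mod_cast hdm
    linarith
  have hs : 0 < Real.sqrt ((m : ℝ) - d) := Real.sqrt_pos.mpr hmd
  have ha : 0 < a := div_pos hr1 hs
  have hac : a < c := by rw [ha_def, hc_def]; gcongr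
  set f : Fin m → ℝ := fun j =>
    if h : (j : ℕ) < d then trap ((2 : ℝ) ^ ((k : ℝ) / d) * (x j - b ⟨j, h⟩))
    else trapr a c (x j) with hf
  have hfj0 : f j0 = 0 := by
    rw [hf]; simp only [dif_neg (not_lt.mpr hj0d)]
    exact trapr_eq_zero ha hac hj0
  have hfle : ∀ j, f j ≤ 2 := by
    intro j
    rw [hf]
    by_cases h : (j : ℕ) < d
    · simp only [dif_pos h]; exact trap_le_two _
    · simp only [dif_neg h]; exact trapr_le_two hac _
  have hsum : ∑ j : Fin m, f j ≤ 2 * ((m : ℝ) - 1) := by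
    have h1 : f j0 + ∑ j ∈ Finset.univ.erase j0, f j = ∑ j : Fin m, f j :=
      Finset.add_sum_erase _ _ (Finset.mem_univ j0)
    have h2 : ∑ j ∈ Finset.univ.erase j0, f j ≤ (Finset.univ.erase j0).card • (2 : ℝ) :=
      Finset.sum_le_card_nsmul _ _ _ (fun j _ => hfle j)
    have h3 : (Finset.univ.erase j0).card = m - 1 := by
      rw [Finset.card_erase_of_mem (Finset.mem_univ j0)]
      simp
    rw [h3] at h2
    have hm1 : 1 ≤ m := by omega
    have : ((m - 1 : ℕ) : ℝ) = (m : ℝ) - 1 := by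
      push_cast [Nat.cast_sub hm1]; ring
    rw [nsmul_eq_mul, this] at h2
    linarith
  unfold extScaling
  have : rect ((∑ j : Fin m, f j) - 2 * ((m : ℝ) - 1)) = 0 :=
    max_eq_left (by linarith)
  rw [hf] at this
  rw [this, mul_zero]

/-- the extended wavelet vanishes when the last `m − d` coordinates have
Euclidean norm at least `r₂`. -/
theorem statement14 (m d : ℕ) (hd : 1 ≤ d) (hdm : d < m) (Cd : ℝ) (hCd : 0 < Cd)
    (r1 r2 : ℝ) (hr1 : 0 < r1) (hr12 : r1 < r2)
    (k : ℤ) (b : Fin d → ℝ) (x : EuclideanSpace ℝ (Fin m))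
    (hx : r2 ≤ Real.sqrt (∑ j : Fin m, if d ≤ (j : ℕ) then (x j) ^ 2 else 0)) :
    extPsi m d Cd r1 r2 k b x = 0 := by
  have hmd : (0 : ℝ) < (m : ℝ) - d := by
    have : (d : ℝ) < m := by exact_mod_cast hdm
    linarith
  have hs : 0 < Real.sqrt ((m : ℝ) - d) := Real.sqrt_pos.mpr hmd
  set c := r2 / Real.sqrt ((m : ℝ) - d) with hc_def
  have hS : r2 ^ 2 ≤ ∑ j : Fin m, if d ≤ (j : ℕ) then (x j) ^ 2 else 0 :=
    (Real.le_sqrt' (by linarith : 0 < r2)).mp hx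
  obtain ⟨j0, hj0d, hj0⟩ : ∃ j : Fin m, d ≤ (j : ℕ) ∧ c ≤ |x j| := by
    by_contra h
    push_neg at h
    have hlt : ∀ j : Fin m, (if d ≤ (j : ℕ) then (x j) ^ 2 else 0) ≤
        (if d ≤ (j : ℕ) then c ^ 2 else 0) := by
      intro j
      by_cases hj : d ≤ (j : ℕ)
      · simp only [if_pos hj]
        have := h j hj
        have := abs_nonneg (x j)
        nlinarith [sq_abs (x j)]
      · simp [hj]
    have hsum : ∑ j : Fin m, (if d ≤ (j : ℕ) then (x j) ^ 2 else 0) <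
        ∑ j : Fin m, (if d ≤ (j : ℕ) then c ^ 2 else 0) := by
      apply Finset.sum_lt_sum (fun j _ => hlt j)
      refine ⟨⟨d, hdm⟩, Finset.mem_univ _, ?_⟩
      simp only [if_pos (le_refl d)]
      have := h ⟨d, hdm⟩ le_rfl
      have := abs_nonneg (x ⟨d, hdm⟩)
      nlinarith [sq_abs (x ⟨d, hdm⟩)]
    have hcard : ∑ j : Fin m, (if d ≤ (j : ℕ) then c ^ 2 else 0) = ((m : ℝ) - d) * c ^ 2 := by
      rw [Fin.sum_univ_eq_sum_range (fun i => if d ≤ i then c ^ 2 else (0:ℝ))]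
      rw [Finset.range_eq_Ico, ← Finset.sum_Ico_consecutive _ (Nat.zero_le d) (le_of_lt hdm)]
      rw [Finset.sum_congr rfl (fun i hi => if_neg (by simp at hi; omega)),
        Finset.sum_congr rfl (g := fun _ => c ^ 2) (fun i hi => if_pos (by simp at hi; omega))]
      simp [Nat.cast_sub (le_of_lt hdm)]
      try ring
    have hc2 : ((m : ℝ) - d) * c ^ 2 = r2 ^ 2 := by
      rw [hc_def, div_pow, Real.sq_sqrt hmd.le]
      field_simp
    rw [hcard, hc2] at hsum
    linarith
  have e1 := extScaling_eq_zero m d Cd r1 r2 hr1 hr12 hdm k b x j0 hj0d hj0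
  have e2 := extScaling_eq_zero m d Cd r1 r2 hr1 hr12 hdm (k - 1) b x j0 hj0d hj0
  unfold extPsi
  rw [e1, e2]
  ring
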